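/- arXiv:1710.02937 — 2 statements merged into one kernel-verified Lean document; each statement's English description precedes it below -/
import Mathlib

section
/- Let A, B be strictly positive bounded operators on a complex Hilbert space with A ≤ B and m·1 ≤ B ≤ M·1 for scalars 0 < m < M. Then for p ≤ 0: B^p ≤ exp( ((M·1 - B)/(M-m))·ln m^p + ((B - m·1)/(M-m))·ln M^p ) ≤ K(m,M,p)·A^p, where K(m,M,p) = (m M^p - M m^p)/((p-1)(M-m)) · ( ((p-1)/p)·(M^p - m^p)/(m M^p - M m^p) )^p is the generalized Kantorovich constant. -/
/-!
Write `u = (M - t)/(M - m)` and `v = (t - m)/(M - m)` for `t ∈ [m, M]`. Concavity of `log`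
gives `log t ≥ u log m + v log M`, and multiplying by `p ≤ 0` yields the first inequality
pointwise on the spectrum of `B`. Convexity of `exp` bounds the geometric interpolation
`(m^p)^u (M^p)^v` by the chord `a t + b` of `t ↦ t^p`, whose slope `a` is `≤ 0`; an affine map
with nonpositive slope is operator antitone, so `A ≤ B` moves it from `B` to `A`. Finally the
chord lies below `K t^p` for every `t > 0`, which is a rescaled Bernoulli inequality.
-/

open Real Set

section Scalar

variable {m M t : ℝ}

lemma one_add_mul_sub_one_le_rpow_of_nonpos {p x : ℝ} (hp : p ≤ 0) (hx : 0 < x) :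
    1 + p * (x - 1) ≤ x ^ p := by
  have hlog : p * (x - 1) ≤ p * log x := mul_le_mul_of_nonpos_left (log_le_sub_one_of_pos hx) hp
  calc 1 + p * (x - 1) ≤ p * log x + 1 := by linarith
    _ ≤ exp (p * log x) := add_one_le_exp _
    _ = x ^ p := by rw [rpow_def_of_pos hx, mul_comm]

lemma chord_weights (hmM : m < M) (ht : t ∈ Icc m M) :
    0 ≤ (M - t) / (M - m) ∧ 0 ≤ (t - m) / (M - m) ∧
      (M - t) / (M - m) + (t - m) / (M - m) = 1 := by
  have hMm : 0 < M - m := sub_pos.mpr hmM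
  refine ⟨div_nonneg (by linarith [ht.2]) hMm.le, div_nonneg (by linarith [ht.1]) hMm.le, ?_⟩
  rw [← add_div, div_eq_one_iff_eq hMm.ne']
  ring

lemma ConcaveOn.chord_le {f : ℝ → ℝ} {s : Set ℝ} (hf : ConcaveOn ℝ s f) (hm : m ∈ s)
    (hM : M ∈ s) (hmM : m < M) (ht : t ∈ Icc m M) :
    (M - t) / (M - m) * f m + (t - m) / (M - m) * f M ≤ f t := by
  obtain ⟨hu, hv, huv⟩ := chord_weights hmM ht
  have hcomb : (M - t) / (M - m) * m + (t - m) / (M - m) * M = t := by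
    field_simp [(sub_pos.mpr hmM).ne']
    ring
  simpa only [smul_eq_mul, hcomb] using hf.2 hm hM hu hv huv

lemma rpow_le_exp_chord_log {p : ℝ} (hm : 0 < m) (hmM : m < M) (hp : p ≤ 0)
    (ht : t ∈ Icc m M) :
    t ^ p ≤ exp ((M - t) / (M - m) * log (m ^ p) + (t - m) / (M - m) * log (M ^ p)) := by
  have hchord := strictConcaveOn_log_Ioi.concaveOn.chord_le hm (hm.trans hmM) hmM ht
  rw [rpow_def_of_pos (hm.trans_le ht.1), log_rpow hm, log_rpow (hm.trans hmM), exp_le_exp]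
  linarith [mul_le_mul_of_nonpos_left hchord hp]

lemma exp_chord_log_le_chord {x y : ℝ} (hx : 0 < x) (hy : 0 < y) (hmM : m < M)
    (ht : t ∈ Icc m M) :
    exp ((M - t) / (M - m) * log x + (t - m) / (M - m) * log y) ≤
      (y - x) / (M - m) * t + (M * x - m * y) / (M - m) := by
  obtain ⟨hu, hv, huv⟩ := chord_weights hmM ht
  have h := convexOn_exp.2 (mem_univ (log x)) (mem_univ (log y)) hu hv huv
  simp only [smul_eq_mul, exp_log hx, exp_log hy] at h
  calc _ ≤ _ := h
    _ = _ := by field_simp [(sub_pos.mpr hmM).ne']; ring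

noncomputable def kantorovichConst (m M p : ℝ) : ℝ :=
  if p = 0 then 1 else
    (m * M ^ p - M * m ^ p) / ((p - 1) * (M - m)) *
      (((p - 1) / p) * (M ^ p - m ^ p) / (m * M ^ p - M * m ^ p)) ^ p

lemma chord_rpow_le_kantorovichConst_mul_rpow {p : ℝ} (hm : 0 < m) (hmM : m < M) (hp : p ≤ 0)
    (ht : 0 < t) :
    (M ^ p - m ^ p) / (M - m) * t + (M * m ^ p - m * M ^ p) / (M - m) ≤
      kantorovichConst m M p * t ^ p := by
  rcases hp.eq_or_lt with rfl | hp
  · simp [kantorovichConst, div_self (sub_pos.mpr hmM).ne']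
  have hM : 0 < M := hm.trans hmM
  have hMp : M ^ p < m ^ p := rpow_lt_rpow_of_neg hm hmM hp
  have hden : m * M ^ p - M * m ^ p < 0 := by
    nlinarith [rpow_pos_of_pos hm p, rpow_pos_of_pos hM p]
  set c := ((p - 1) / p) * (M ^ p - m ^ p) / (m * M ^ p - M * m ^ p)
  set β := (m * M ^ p - M * m ^ p) / ((p - 1) * (M - m))
  have hc : 0 < c :=
    div_pos_of_neg_of_neg (mul_neg_of_pos_of_neg (div_pos_of_neg_of_neg (by linarith) hp)
      (by linarith)) hden
  have hβ : 0 < β := div_pos_of_neg_of_neg hden (mul_neg_of_neg_of_pos (by linarith) (by linarith))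
  -- The chord is `β (1 + p (c t - 1))`, the tangent of `β (c t)^p` at `c t = 1`.
  have htangent : β * (1 + p * (c * t - 1)) =
      (M ^ p - m ^ p) / (M - m) * t + (M * m ^ p - m * M ^ p) / (M - m) := by
    have hp1 : p - 1 ≠ 0 := by linarith
    simp only [c, β]
    field_simp [(sub_pos.mpr hmM).ne', hp.ne, hden.ne]
    ring
  rw [← htangent, kantorovichConst, if_neg hp.ne, mul_assoc, ← mul_rpow hc.le ht.le]
  exact mul_le_mul_of_nonneg_left (one_add_mul_sub_one_le_rpow_of_nonpos hp.le (mul_pos hc ht))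
    hβ.le

end Scalar

section Operator

variable {𝒜 : Type*} [CStarAlgebra 𝒜] [PartialOrder 𝒜] [StarOrderedRing 𝒜]

lemma spectrum_subset_Icc_of_algebraMap_le {a : 𝒜} {m M : ℝ} (ha : IsSelfAdjoint a)
    (hma : algebraMap ℝ 𝒜 m ≤ a) (haM : a ≤ algebraMap ℝ 𝒜 M) : spectrum ℝ a ⊆ Icc m M :=
  fun t ht => ⟨(algebraMap_le_iff_le_spectrum ha).mp hma t ht,
    (le_algebraMap_iff_spectrum_le ha).mp haM t ht⟩

lemma IsStrictlyPositive.continuousOn_rpow {a : 𝒜} (ha : IsStrictlyPositive a) (p : ℝ) :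
    ContinuousOn (fun t : ℝ => t ^ p) (spectrum ℝ a) :=
  continuousOn_id.rpow_const fun _ ht => Or.inl (ha.spectrum_pos ht).ne'

lemma cfc_mul_add_const_le_of_le_of_nonpos {a b : 𝒜} (ha : IsSelfAdjoint a)
    (hb : IsSelfAdjoint b) (hab : a ≤ b) {c : ℝ} (hc : c ≤ 0) (d : ℝ) :
    cfc (fun t : ℝ => c * t + d) b ≤ cfc (fun t : ℝ => c * t + d) a := by
  rw [cfc_add_const d _ b, cfc_add_const d _ a, cfc_const_mul_id c b, cfc_const_mul_id c a]
  exact add_le_add_left (smul_le_smul_of_nonpos_left hab hc) _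

end Operator

theorem stmt_6_general {H : Type*} [NormedAddCommGroup H] [InnerProductSpace ℂ H] [CompleteSpace H]
    (A B : H →L[ℂ] H) (hA0 : 0 ≤ A) (hAu : IsUnit A)
    (m M : ℝ) (hm : 0 < m) (hmM : m < M)
    (hAB : A ≤ B) (hmB : m • (1 : H →L[ℂ] H) ≤ B) (hBM : B ≤ M • (1 : H →L[ℂ] H))
    (p : ℝ) (hp : p ≤ 0) (K : ℝ)
    (hK : K = if p = 0 then 1 else
      (m * M ^ p - M * m ^ p) / ((p - 1) * (M - m)) *
        (((p - 1) / p) * (M ^ p - m ^ p) / (m * M ^ p - M * m ^ p)) ^ p) :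
    cfc (fun t : ℝ => t ^ p) B ≤
      cfc (fun t : ℝ => Real.exp (((M - t) / (M - m)) * Real.log (m ^ p) +
        ((t - m) / (M - m)) * Real.log (M ^ p))) B ∧
    cfc (fun t : ℝ => Real.exp (((M - t) / (M - m)) * Real.log (m ^ p) +
        ((t - m) / (M - m)) * Real.log (M ^ p))) B ≤
      K • cfc (fun t : ℝ => t ^ p) A := by
  rw [← Algebra.algebraMap_eq_smul_one] at hmB hBM
  have hA : IsStrictlyPositive A := hAu.isStrictlyPositive hA0
  have hB : IsStrictlyPositive B := (isStrictlyPositive_algebraMap hm).of_le hmB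
  have hspecB := spectrum_subset_Icc_of_algebraMap_le hB.isSelfAdjoint hmB hBM
  have hslope : (M ^ p - m ^ p) / (M - m) ≤ 0 :=
    div_nonpos_of_nonpos_of_nonneg (sub_nonpos.mpr (rpow_le_rpow_of_nonpos hm hmM.le hp))
      (sub_pos.mpr hmM).le
  subst hK
  refine ⟨cfc_mono (fun t ht => rpow_le_exp_chord_log hm hmM hp (hspecB ht))
    (hB.continuousOn_rpow p), ?_⟩
  calc _ ≤ cfc (fun t : ℝ => (M ^ p - m ^ p) / (M - m) * t +
          (M * m ^ p - m * M ^ p) / (M - m)) B :=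
        cfc_mono fun t ht => exp_chord_log_le_chord (rpow_pos_of_pos hm p)
          (rpow_pos_of_pos (hm.trans hmM) p) hmM (hspecB ht)
    _ ≤ cfc (fun t : ℝ => (M ^ p - m ^ p) / (M - m) * t +
          (M * m ^ p - m * M ^ p) / (M - m)) A :=
        cfc_mul_add_const_le_of_le_of_nonpos hA.isSelfAdjoint hB.isSelfAdjoint hAB hslope _
    _ ≤ cfc (fun t : ℝ => kantorovichConst m M p * t ^ p) A :=
        cfc_mono (fun t ht => chord_rpow_le_kantorovichConst_mul_rpow hm hmM hp
          (hA.spectrum_pos ht)) (by fun_prop) (continuousOn_const.mul (hA.continuousOn_rpow p))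
    _ = _ := cfc_const_mul _ _ A (hA.continuousOn_rpow p)

/-- `B^p ≤ exp(...) ≤ K(m,M,p) A^p` for `p ≤ 0`, with the generalized Kantorovich
constant (interpreted as `1` in the limiting case `p = 0`). -/
theorem stmt_6 {H : Type*} [NormedAddCommGroup H] [InnerProductSpace ℂ H] [CompleteSpace H]
    (A B : H →L[ℂ] H) (hA0 : 0 ≤ A) (hAu : IsUnit A) (hB0 : 0 ≤ B) (hBu : IsUnit B)
    (m M : ℝ) (hm : 0 < m) (hmM : m < M)
    (hAB : A ≤ B) (hmB : m • (1 : H →L[ℂ] H) ≤ B) (hBM : B ≤ M • (1 : H →L[ℂ] H))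
    (p : ℝ) (hp : p ≤ 0) (K : ℝ)
    (hK : K = if p = 0 then 1 else
      (m * M ^ p - M * m ^ p) / ((p - 1) * (M - m)) *
        (((p - 1) / p) * (M ^ p - m ^ p) / (m * M ^ p - M * m ^ p)) ^ p) :
    cfc (fun t : ℝ => t ^ p) B ≤
      cfc (fun t : ℝ => Real.exp (((M - t) / (M - m)) * Real.log (m ^ p) +
        ((t - m) / (M - m)) * Real.log (M ^ p))) B ∧
    cfc (fun t : ℝ => Real.exp (((M - t) / (M - m)) * Real.log (m ^ p) +
        ((t - m) / (M - m)) * Real.log (M ^ p))) B ≤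
      K • cfc (fun t : ℝ => t ^ p) A :=
  stmt_6_general A B hA0 hAu m M hm hmM hAB hmB hBM p hp K hK
end

section
/- Let A, B be strictly positive bounded operators on a complex Hilbert space with A ≤ B and m·1 ≤ B ≤ M·1 for scalars 0 < m < M. Then for p ≤ 0, q ≤ 0: B^p ≤ exp( ((M·1 - B)/(M-m))·ln m^p + ((B - m·1)/(M-m))·ln M^p ) ≤ C(m,M,p,q)·1 + A^q, where C(m,M,p,q) = (M m^p - m M^p)/(M-m) + (q-1)·((M^p - m^p)/(q(M-m)))^(q/(q-1)) when m ≤ ((M^p - m^p)/(q(M-m)))^(1/(q-1)) ≤ M, and C(m,M,p,q) = max{ M^p - M^q, m^p - m^q } otherwise. -/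
/-!
Write `F` for the middle term. On `[m, M] ⊇ σ(B)` one has `t ^ p ≤ F t` by concavity of `log`,
and `F t` lies below the secant of `t ^ p` over `[m, M]` by convexity of `exp`. That secant, or a
line above it on `[m, M]`, has nonpositive slope, so applying it to `A ≤ B` reverses the order.
It then remains to bound the line minus `t ^ q` on `(0, M] ⊇ σ(A)`, and `C(m, M, p, q)` is that
maximum, found from the tangent lines of the convex function `t ↦ t ^ q`.
-/

open Set

/-- The constant `C(m, M, p, q)`. -/
noncomputable def kantorovichDiffConst (m M p q : ℝ) : ℝ :=
  if ((M ^ p - m ^ p) / (q * (M - m))) ^ (1 / (q - 1)) ∈ Set.Icc m M then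
    (M * m ^ p - m * M ^ p) / (M - m) +
      (q - 1) * ((M ^ p - m ^ p) / (q * (M - m))) ^ (q / (q - 1))
  else
    max (M ^ p - M ^ q) (m ^ p - m ^ q)

namespace Real

lemma one_add_mul_sub_one_le_rpow {q u : ℝ} (hq : q ≤ 0) (hu : 0 < u) :
    1 + q * (u - 1) ≤ u ^ q := by
  have hlog : q * (u - 1) ≤ q * log u := mul_le_mul_of_nonpos_left (log_le_sub_one_of_pos hu) hq
  rw [rpow_def_of_pos hu, mul_comm (log u)]
  linarith [add_one_le_exp (q * log u)]

lemma rpow_add_mul_sub_le_rpow {q s t : ℝ} (hq : q ≤ 0) (hs : 0 < s) (ht : 0 < t) :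
    s ^ q + q * s ^ (q - 1) * (t - s) ≤ t ^ q := by
  have hsq : 0 < s ^ q := rpow_pos_of_pos hs q
  calc s ^ q + q * s ^ (q - 1) * (t - s) = s ^ q * (1 + q * (t / s - 1)) := by
        rw [rpow_sub_one hs.ne']; field_simp
    _ ≤ s ^ q * (t / s) ^ q :=
        mul_le_mul_of_nonneg_left (one_add_mul_sub_one_le_rpow hq (div_pos ht hs)) hsq.le
    _ = t ^ q := by rw [div_rpow ht.le hs.le]; field_simp

/-- The concave function `t ↦ q X t - t ^ q` peaks at `t = X ^ (1 / (q - 1))`. -/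
lemma mul_mul_sub_rpow_le {q X t : ℝ} (hq : q < 0) (hX : 0 < X) (ht : 0 < t) :
    q * X * t - t ^ q ≤ (q - 1) * X ^ (q / (q - 1)) := by
  have hq1 : q - 1 ≠ 0 := by linarith
  set s := X ^ (1 / (q - 1))
  have hs_sub_one : s ^ (q - 1) = X := by
    rw [← rpow_mul hX.le, one_div_mul_cancel hq1, rpow_one]
  have hs_pow : s ^ q = X ^ (q / (q - 1)) := by
    rw [← rpow_mul hX.le, one_div_mul_eq_div]
  have hXs : X * s = X ^ (q / (q - 1)) := by
    have hexp : q / (q - 1) = 1 + 1 / (q - 1) := by field_simp; ring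
    rw [hexp, rpow_add hX, rpow_one]
  have htangent := rpow_add_mul_sub_le_rpow hq.le (rpow_pos_of_pos hX (1 / (q - 1))) ht
  rw [hs_sub_one, hs_pow] at htangent
  linear_combination htangent + q * hXs

lemma mul_sub_le_rpow_sub_rpow {q b M t : ℝ} (hq : q ≤ 0) (hM : 0 < M)
    (hb : q * M ^ (q - 1) ≤ b) (ht : 0 < t) (htM : t ≤ M) :
    b * (t - M) ≤ t ^ q - M ^ q := by
  have htangent := rpow_add_mul_sub_le_rpow hq hM ht
  nlinarith

lemma rpow_one_div_sub_one_mem_Icc {q X m M : ℝ} (hq : q < 0) (hm : 0 < m) (hM : 0 < M)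
    (hXM : M ^ (q - 1) ≤ X) (hXm : X ≤ m ^ (q - 1)) :
    X ^ (1 / (q - 1)) ∈ Icc m M := by
  have hq1 : q - 1 < 0 := by linarith
  have hX : 0 < X := (rpow_pos_of_pos hM _).trans_le hXM
  rw [one_div]
  exact ⟨(le_rpow_inv_iff_of_neg hm hX hq1).mpr hXm, (rpow_inv_le_iff_of_neg hX hM hq1).mpr hXM⟩

lemma le_mul_rpow_sub_one_of_notMem_Icc {q b m M : ℝ} (hq : q ≤ 0) (hm : 0 < m) (hM : 0 < M)
    (hcond : (b / q) ^ (1 / (q - 1)) ∉ Icc m M) (hbM : b < q * M ^ (q - 1)) :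
    b ≤ q * m ^ (q - 1) := by
  by_contra! hbm
  rcases hq.lt_or_eq with hq0 | rfl
  · refine hcond (rpow_one_div_sub_one_mem_Icc hq0 hm hM ?_ ?_)
    · exact (le_div_iff_of_neg hq0).mpr (by linarith)
    · exact (div_le_iff_of_neg hq0).mpr (by linarith)
  · simp only [zero_mul] at hbm hbM
    linarith

end Real

open Real

lemma interpolation_weights {m M t : ℝ} (hmM : m < M) (ht : t ∈ Icc m M) :
    0 ≤ (M - t) / (M - m) ∧ 0 ≤ (t - m) / (M - m) ∧
      (M - t) / (M - m) + (t - m) / (M - m) = 1 ∧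
      (M - t) / (M - m) * m + (t - m) / (M - m) * M = t := by
  have hMm : 0 < M - m := sub_pos.mpr hmM
  refine ⟨div_nonneg (by linarith [ht.2]) hMm.le, div_nonneg (by linarith [ht.1]) hMm.le, ?_, ?_⟩
  · field_simp; ring
  · field_simp; ring

/-- Concavity of `log`, multiplied by `p ≤ 0`. -/
lemma rpow_le_exp_interpolation {m M p t : ℝ} (hm : 0 < m) (hmM : m < M) (hp : p ≤ 0)
    (ht : t ∈ Icc m M) :
    t ^ p ≤ exp ((M - t) / (M - m) * log (m ^ p) + (t - m) / (M - m) * log (M ^ p)) := by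
  obtain ⟨hw₁, hw₂, hsum, hcomb⟩ := interpolation_weights hmM ht
  have hlog := strictConcaveOn_log_Ioi.concaveOn.2 (mem_Ioi.mpr hm)
    (mem_Ioi.mpr (hm.trans hmM)) hw₁ hw₂ hsum
  simp only [smul_eq_mul, hcomb] at hlog
  rw [rpow_def_of_pos (hm.trans_le ht.1), log_rpow hm, log_rpow (hm.trans hmM), exp_le_exp]
  nlinarith [mul_le_mul_of_nonpos_left hlog hp]

lemma exp_interpolation_le_secant {m M u v t : ℝ} (hmM : m < M) (hu : 0 < u) (hv : 0 < v)
    (ht : t ∈ Icc m M) :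
    exp ((M - t) / (M - m) * log u + (t - m) / (M - m) * log v) ≤
      (M - t) / (M - m) * u + (t - m) / (M - m) * v := by
  obtain ⟨hw₁, hw₂, hsum, -⟩ := interpolation_weights hmM ht
  simpa only [smul_eq_mul, exp_log hu, exp_log hv] using
    convexOn_exp.2 (mem_univ (log u)) (mem_univ (log v)) hw₁ hw₂ hsum

/-- The three cases of `kantorovichDiffConst`: the secant of `t ^ p` over `[m, M]` (or, when its
slope is too steep, the line through `(m, m ^ p)` with the slope of `t ^ q` at `m`) exceeds
`t ^ q` on `(0, M]` by at most `C(m, M, p, q)`. -/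
theorem exists_antitone_affine_between_secant_and_rpow {m M p q : ℝ} (hm : 0 < m) (hmM : m < M)
    (hp : p ≤ 0) (hq : q ≤ 0) :
    ∃ α β : ℝ, β ≤ 0 ∧
      (∀ t ∈ Icc m M, (M - t) / (M - m) * m ^ p + (t - m) / (M - m) * M ^ p ≤ α + β * t) ∧
      ∀ t ∈ Ioc 0 M, α + β * t ≤ kantorovichDiffConst m M p q + t ^ q := by
  have hM : 0 < M := hm.trans hmM
  have hMm : 0 < M - m := sub_pos.mpr hmM
  set b := (M ^ p - m ^ p) / (M - m) with hb_def
  set X := (M ^ p - m ^ p) / (q * (M - m)) with hX_def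
  have hpow : M ^ p ≤ m ^ p := rpow_le_rpow_of_nonpos hm hmM.le hp
  have hb : b ≤ 0 := div_nonpos_of_nonpos_of_nonneg (by linarith) hMm.le
  have hXb : X = b / q := by rw [hX_def, hb_def, div_div, mul_comm]
  have hX : 0 ≤ X := hXb ▸ div_nonneg_of_nonpos hb hq
  have hsecant : ∀ t, (M - t) / (M - m) * m ^ p + (t - m) / (M - m) * M ^ p =
      (M ^ p - b * M) + b * t := by
    intro t; rw [hb_def]; field_simp; ring
  have hsecant_le : ∀ t ∈ Icc m M, (M - t) / (M - m) * m ^ p + (t - m) / (M - m) * M ^ p ≤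
      (M ^ p - b * M) + b * t := fun t _ => (hsecant t).le
  by_cases hcond : X ^ (1 / (q - 1)) ∈ Icc m M
  · have hX_pos : 0 < X := by
      refine hX.lt_of_ne fun hX0 => ?_
      rw [← hX0, zero_rpow (one_div_ne_zero (by linarith))] at hcond
      exact absurd hcond.1 (not_le.mpr hm)
    have hq0 : q < 0 := hq.lt_of_ne fun hq0 => by simp [hXb, hq0] at hX_pos
    have hqX : q * X = b := by rw [hXb, mul_div_cancel₀ _ hq0.ne]
    refine ⟨M ^ p - b * M, b, hb, hsecant_le, fun t ht => ?_⟩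
    have hyoung := mul_mul_sub_rpow_le hq0 hX_pos ht.1
    have ha : (M * m ^ p - m * M ^ p) / (M - m) = M ^ p - b * M := by
      rw [hb_def]; field_simp; ring
    rw [kantorovichDiffConst, if_pos hcond, ← hX_def, ha, ← hqX]
    linarith
  rw [kantorovichDiffConst, if_neg hcond]
  by_cases hbM : q * M ^ (q - 1) ≤ b
  · refine ⟨M ^ p - b * M, b, hb, hsecant_le, fun t ht => ?_⟩
    have := mul_sub_le_rpow_sub_rpow hq hM hbM ht.1 ht.2
    linarith [le_max_left (M ^ p - M ^ q) (m ^ p - m ^ q)]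
  · have hbm := le_mul_rpow_sub_one_of_notMem_Icc hq hm hM (hXb ▸ hcond) (not_le.mp hbM)
    refine ⟨m ^ p - q * m ^ (q - 1) * m, q * m ^ (q - 1),
      mul_nonpos_of_nonpos_of_nonneg hq (rpow_pos_of_pos hm _).le, fun t ht => ?_, fun t ht => ?_⟩
    · have hslope := mul_le_mul_of_nonneg_right hbm (sub_nonneg.mpr ht.1)
      have hb_m : M ^ p - b * M = m ^ p - b * m := by rw [hb_def]; field_simp; ring
      rw [hsecant, hb_m]
      linarith
    · have htangent := rpow_add_mul_sub_le_rpow hq hm ht.1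
      linarith [le_max_right (M ^ p - M ^ q) (m ^ p - m ^ q)]

section CStarAlgebra

variable {𝒜 : Type*} [CStarAlgebra 𝒜] [PartialOrder 𝒜] [StarOrderedRing 𝒜]

lemma spectrum_subset_Icc_of_smul_one_le {a : 𝒜} (ha : IsSelfAdjoint a) {m M : ℝ}
    (hma : m • (1 : 𝒜) ≤ a) (haM : a ≤ M • (1 : 𝒜)) : spectrum ℝ a ⊆ Icc m M := by
  rw [← Algebra.algebraMap_eq_smul_one] at hma haM
  exact fun x hx => ⟨(algebraMap_le_iff_le_spectrum ha).mp hma x hx,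
    (le_algebraMap_iff_spectrum_le ha).mp haM x hx⟩

lemma spectrum_subset_Ioc_of_le_smul_one {a : 𝒜} (ha : 0 ≤ a) (hu : IsUnit a) {M : ℝ}
    (haM : a ≤ M • (1 : 𝒜)) : spectrum ℝ a ⊆ Ioc 0 M := by
  rw [← Algebra.algebraMap_eq_smul_one] at haM
  refine fun x hx => ⟨(spectrum_nonneg_of_nonneg ha hx).lt_of_ne ?_,
    (le_algebraMap_iff_spectrum_le ha.isSelfAdjoint).mp haM x hx⟩
  rintro rfl
  exact spectrum.zero_notMem ℝ hu hx

/-- An affine function with nonpositive slope reverses `a ≤ b`. -/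
theorem cfc_le_smul_one_add_cfc_of_affine {a b : 𝒜} (hab : a ≤ b) (ha : IsSelfAdjoint a)
    (hb : IsSelfAdjoint b) {f g : ℝ → ℝ} (hf : ContinuousOn f (spectrum ℝ b))
    (hg : ContinuousOn g (spectrum ℝ a)) {α β C : ℝ} (hβ : β ≤ 0)
    (hfl : ∀ x ∈ spectrum ℝ b, f x ≤ α + β * x) (hlg : ∀ x ∈ spectrum ℝ a, α + β * x ≤ C + g x) :
    cfc f b ≤ C • (1 : 𝒜) + cfc g a :=
  calc cfc f b ≤ cfc (fun x => α + β * x) b := cfc_mono hfl hf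
    _ = algebraMap ℝ 𝒜 α + β • b := by rw [cfc_const_add α _ b, cfc_const_mul_id β b]
    _ ≤ algebraMap ℝ 𝒜 α + β • a := add_le_add le_rfl (smul_le_smul_of_nonpos_left hab hβ)
    _ = cfc (fun x => α + β * x) a := by rw [cfc_const_add α _ a, cfc_const_mul_id β a]
    _ ≤ cfc (fun x => C + g x) a := cfc_mono hlg
        (continuousOn_const.add (continuousOn_const.mul continuousOn_id)) (continuousOn_const.add hg)
    _ = C • (1 : 𝒜) + cfc g a := by rw [cfc_const_add C g a, Algebra.algebraMap_eq_smul_one]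

end CStarAlgebra

theorem stmt_9_general {H : Type*} [NormedAddCommGroup H] [InnerProductSpace ℂ H] [CompleteSpace H]
    (A B : H →L[ℂ] H) (hA0 : 0 ≤ A) (hAu : IsUnit A) (hB0 : 0 ≤ B)
    (m M : ℝ) (hm : 0 < m) (hmM : m < M)
    (hAB : A ≤ B) (hmB : m • (1 : H →L[ℂ] H) ≤ B) (hBM : B ≤ M • (1 : H →L[ℂ] H))
    (p q : ℝ) (hp : p ≤ 0) (hq : q ≤ 0) (C : ℝ)
    (hC : C =
      if ((M ^ p - m ^ p) / (q * (M - m))) ^ (1 / (q - 1)) ∈ Set.Icc m M then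
        (M * m ^ p - m * M ^ p) / (M - m) +
          (q - 1) * ((M ^ p - m ^ p) / (q * (M - m))) ^ (q / (q - 1))
      else
        max (M ^ p - M ^ q) (m ^ p - m ^ q)) :
    cfc (fun t : ℝ => t ^ p) B ≤
      cfc (fun t : ℝ => Real.exp (((M - t) / (M - m)) * Real.log (m ^ p) +
        ((t - m) / (M - m)) * Real.log (M ^ p))) B ∧
    cfc (fun t : ℝ => Real.exp (((M - t) / (M - m)) * Real.log (m ^ p) +
        ((t - m) / (M - m)) * Real.log (M ^ p))) B ≤
      C • (1 : H →L[ℂ] H) + cfc (fun t : ℝ => t ^ q) A := by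
  have hσB := spectrum_subset_Icc_of_smul_one_le hB0.isSelfAdjoint hmB hBM
  have hσA := spectrum_subset_Ioc_of_le_smul_one hA0 hAu (hAB.trans hBM)
  have hM : 0 < M := hm.trans hmM
  have hBp : ContinuousOn (fun t : ℝ => t ^ p) (spectrum ℝ B) :=
    continuousOn_id.rpow_const fun t ht => Or.inl (hm.trans_le (hσB ht).1).ne'
  have hAq : ContinuousOn (fun t : ℝ => t ^ q) (spectrum ℝ A) :=
    continuousOn_id.rpow_const fun t ht => Or.inl (hσA ht).1.ne'
  refine ⟨cfc_mono (fun t ht => rpow_le_exp_interpolation hm hmM hp (hσB ht)) hBp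
    (by fun_prop), ?_⟩
  subst hC
  obtain ⟨α, β, hβ, hsecant, hline⟩ := exists_antitone_affine_between_secant_and_rpow hm hmM hp hq
  refine cfc_le_smul_one_add_cfc_of_affine hAB hA0.isSelfAdjoint hB0.isSelfAdjoint (by fun_prop)
    hAq hβ (fun t ht => ?_) (fun t ht => hline t (hσA ht))
  exact (exp_interpolation_le_secant hmM (rpow_pos_of_pos hm p) (rpow_pos_of_pos hM p)
    (hσB ht)).trans (hsecant t (hσB ht))

/-- Difference-type bound: `B^p ≤ exp(...) ≤ C(m,M,p,q)·1 + A^q` for `p, q ≤ 0`. -/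
theorem stmt_9 {H : Type*} [NormedAddCommGroup H] [InnerProductSpace ℂ H] [CompleteSpace H]
    (A B : H →L[ℂ] H) (hA0 : 0 ≤ A) (hAu : IsUnit A) (hB0 : 0 ≤ B) (hBu : IsUnit B)
    (m M : ℝ) (hm : 0 < m) (hmM : m < M)
    (hAB : A ≤ B) (hmB : m • (1 : H →L[ℂ] H) ≤ B) (hBM : B ≤ M • (1 : H →L[ℂ] H))
    (p q : ℝ) (hp : p ≤ 0) (hq : q ≤ 0) (C : ℝ)
    (hC : C =
      if ((M ^ p - m ^ p) / (q * (M - m))) ^ (1 / (q - 1)) ∈ Set.Icc m M then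
        (M * m ^ p - m * M ^ p) / (M - m) +
          (q - 1) * ((M ^ p - m ^ p) / (q * (M - m))) ^ (q / (q - 1))
      else
        max (M ^ p - M ^ q) (m ^ p - m ^ q)) :
    cfc (fun t : ℝ => t ^ p) B ≤
      cfc (fun t : ℝ => Real.exp (((M - t) / (M - m)) * Real.log (m ^ p) +
        ((t - m) / (M - m)) * Real.log (M ^ p))) B ∧
    cfc (fun t : ℝ => Real.exp (((M - t) / (M - m)) * Real.log (m ^ p) +
        ((t - m) / (M - m)) * Real.log (M ^ p))) B ≤
      C • (1 : H →L[ℂ] H) + cfc (fun t : ℝ => t ^ q) A :=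
  stmt_9_general A B hA0 hAu hB0 m M hm hmM hAB hmB hBM p q hp hq C hC
end
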